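/- arXiv:1710.10542 — 3 statements merged into one kernel-verified Lean document; each statement's English description precedes it below -/
import Mathlib

section
/- Let F be a free group on a finite set. Then every non-trivial element g of F satisfies scl(g) ≥ 1/6. -/
/-!
Write `g = u R u⁻¹` with `R` cyclically reduced of length `l`, put `E = ⌊l/2⌋ + 1`, and let
`φ(x)` count the length-`E` subwords of the reduced word of `x` that occur in the periodic word
`R R R ⋯`, minus the same count for `x⁻¹`. Concatenating two words changes the count by between
`0` and `E - 1`, and the reduced word of `x y` is `p q` where `x = p r`, `y = r⁻¹ q`; so `φ` is an
antisymmetric quasimorphism of defect `D = 3 (E - 1)`. Hence `|φ| ≤ 4 D m` on products of `m`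
commutators, and conjugation lowers `φ` by at most `2 D`.
Since `2 E > l`, no subword of length `E` of `R^∞` has its inverse in `R^∞` as well: a reflection
of `ℤ/l` would then fix a letter or an adjacent pair of letters of the cyclic word `R`. So every
window of `R^n` counts positively and none negatively, `φ(R^n) = n l + 1 - E`, and comparing the
two bounds gives `n ≤ 6 cl(g^n) + 3`.
-/

open Filter Topology
open scoped ENNReal
open scoped commutatorElement

/-- The commutator length of `g`, valued in `ℝ≥0∞` (it is `∞` when `g` is not a
product of commutators). -/
noncomputable def commLength {G : Type*} [Group G] (g : G) : ℝ≥0∞ :=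
  sInf ((fun m : ℕ => (m : ℝ≥0∞)) ''
    {m : ℕ | ∃ x y : Fin m → G, g = (List.ofFn fun i => ⁅x i, y i⁆).prod})

/-- The stable commutator length of `g`: the limit of `cl(g^n)/n`.  (When the
limit exists it coincides with the `liminf`; if no nonzero power of `g` lies in
the commutator subgroup this is `∞`.) -/
noncomputable def scl {G : Type*} [Group G] (g : G) : ℝ≥0∞ :=
  Filter.liminf (fun n : ℕ => commLength (g ^ n) / (n : ℝ≥0∞)) Filter.atTop


structure IsAntisymmQuasimorphism {G : Type*} [Group G] (φ : G → ℤ) (D : ℤ) : Prop where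
  abs_map_mul_sub_le : ∀ a b, |φ (a * b) - φ a - φ b| ≤ D
  map_inv : ∀ a, φ a⁻¹ = -φ a

namespace IsAntisymmQuasimorphism

variable {G : Type*} [Group G] {φ : G → ℤ} {D : ℤ} (hφ : IsAntisymmQuasimorphism φ D)
include hφ

theorem map_one : φ 1 = 0 := by
  have := hφ.map_inv 1
  rw [inv_one] at this
  omega

theorem abs_map_commutatorElement_le (a b : G) : |φ ⁅a, b⁆| ≤ 3 * D := by
  have h₁ := hφ.abs_map_mul_sub_le (a * b) (a⁻¹ * b⁻¹)
  have h₂ := hφ.abs_map_mul_sub_le a b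
  have h₃ := hφ.abs_map_mul_sub_le a⁻¹ b⁻¹
  rw [commutatorElement_def, mul_assoc (a * b)]
  rw [abs_le] at *
  rw [hφ.map_inv, hφ.map_inv] at h₃
  constructor <;> linarith

theorem abs_map_prod_commutatorElement_le {m : ℕ} (x y : Fin m → G) :
    |φ (List.ofFn fun i => ⁅x i, y i⁆).prod| ≤ 4 * D * m := by
  induction m with
  | zero => simp [hφ.map_one]
  | succ m ih =>
    have h₁ := hφ.abs_map_mul_sub_le ⁅x 0, y 0⁆ (List.ofFn fun i => ⁅x i.succ, y i.succ⁆).prod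
    have h₂ := hφ.abs_map_commutatorElement_le (x 0) (y 0)
    have h₃ := ih (fun i => x i.succ) (fun i => y i.succ)
    rw [List.ofFn_succ, List.prod_cons]
    rw [abs_le] at *
    push_cast
    constructor <;> linarith

theorem map_sub_two_mul_le_map_conj (u t : G) : φ t - 2 * D ≤ φ (u * t * u⁻¹) := by
  have h₁ := hφ.abs_map_mul_sub_le u t
  have h₂ := hφ.abs_map_mul_sub_le (u * t) u⁻¹
  rw [hφ.map_inv, abs_le] at *
  linarith

end IsAntisymmQuasimorphism

section StableCommutatorLength

variable {G : Type*} [Group G]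

theorem le_commLength {g : G} {a : ℝ≥0∞}
    (h : ∀ m (x y : Fin m → G), g = (List.ofFn fun i => ⁅x i, y i⁆).prod → a ≤ m) :
    a ≤ commLength g := by
  refine le_sInf ?_
  rintro _ ⟨m, ⟨x, y, hg⟩, rfl⟩
  exact h m x y hg

theorem ENNReal.tendsto_natCast_sub_div_natCast (C : ℕ) :
    Tendsto (fun n : ℕ => ((n : ℝ≥0∞) - C) / n) atTop (𝓝 1) := by
  have h : Tendsto (fun n : ℕ => 1 - (C : ℝ≥0∞) * (n : ℝ≥0∞)⁻¹) atTop (𝓝 (1 - C * 0)) :=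
    ENNReal.Tendsto.sub tendsto_const_nhds
      (ENNReal.Tendsto.const_mul ENNReal.tendsto_inv_nat_nhds_zero (Or.inr (by simp)))
      (Or.inl ENNReal.one_ne_top)
  rw [mul_zero, tsub_zero] at h
  refine h.congr' (eventually_ne_atTop 0 |>.mono fun n hn => ?_)
  dsimp only
  rw [ENNReal.sub_div fun _ _ => by exact_mod_cast hn,
    ENNReal.div_self (by exact_mod_cast hn) (ENNReal.natCast_ne_top n), div_eq_mul_inv]

theorem one_div_le_scl_of_pow_eq_prod {g : G} {K C : ℕ}
    (h : ∀ n m (x y : Fin m → G), g ^ n = (List.ofFn fun i => ⁅x i, y i⁆).prod →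
      n ≤ K * m + C) :
    1 / (K : ℝ≥0∞) ≤ scl g := by
  have hcl (n : ℕ) : ((n : ℝ≥0∞) - C) / K ≤ commLength (g ^ n) :=
    le_commLength fun m x y hg => ENNReal.div_le_of_le_mul <| tsub_le_iff_right.2 <| by
      rw [mul_comm]
      exact_mod_cast h n m x y hg
  have hlim : Tendsto (fun n : ℕ => ((n : ℝ≥0∞) - C) / K / n) atTop (𝓝 (1 / K)) := by
    have := ENNReal.Tendsto.div_const (ENNReal.tendsto_natCast_sub_div_natCast C)
      (b := K) (Or.inl one_ne_zero)
    simpa only [div_eq_mul_inv, mul_right_comm] using this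
  rw [← hlim.liminf_eq]
  exact liminf_le_liminf (.of_forall fun n => ENNReal.div_le_div_right (hcl n) _)

end StableCommutatorLength

section FactorCount

variable {β : Type*}

open scoped Classical in
noncomputable def factorCount (S : Set (List β)) (E : ℕ) : List β → ℕ
  | [] => 0
  | a :: w => factorCount S E w + if E ≤ (a :: w).length ∧ (a :: w).take E ∈ S then 1 else 0

variable {S : Set (List β)} {E : ℕ} {w : List β}

@[simp]
theorem factorCount_nil : factorCount S E [] = 0 := rfl

open scoped Classical in
theorem factorCount_cons (a : β) (w : List β) :
    factorCount S E (a :: w) =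
      factorCount S E w + if E ≤ (a :: w).length ∧ (a :: w).take E ∈ S then 1 else 0 := rfl

theorem factorCount_add_factorCount_le (u v : List β) :
    factorCount S E u + factorCount S E v ≤ factorCount S E (u ++ v) := by
  classical
  induction u with
  | nil => simp
  | cons a u ih =>
    rw [List.cons_append, factorCount_cons, factorCount_cons, ← List.cons_append]
    by_cases hE : E ≤ (a :: u).length
    · have hE' : E ≤ (a :: u ++ v).length := by simp at hE ⊢; omega
      simp only [List.take_append_of_le_length hE, hE, hE', true_and]
      omega
    · rw [if_neg (by tauto)]
      omega

theorem factorCount_append_le (u v : List β) :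
    factorCount S E (u ++ v) ≤ factorCount S E u + factorCount S E v + (E - 1) := by
  classical
  suffices factorCount S E (u ++ v) ≤
      factorCount S E u + factorCount S E v + min u.length (E - 1) by omega
  induction u with
  | nil => simp
  | cons a u ih =>
    rw [List.cons_append, factorCount_cons, factorCount_cons, ← List.cons_append]
    by_cases hE : E ≤ (a :: u).length
    · have hE' : E ≤ (a :: u ++ v).length := by simp at hE ⊢; omega
      simp only [List.take_append_of_le_length hE, hE, hE', true_and]
      simp only [List.length_cons] at hE ⊢
      split_ifs <;> omega
    · simp only [List.length_cons] at hE ⊢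
      split_ifs <;> omega

theorem factorCount_eq_zero (h : ∀ s, s <:+: w → s.length = E → s ∉ S) :
    factorCount S E w = 0 := by
  induction w with
  | nil => rfl
  | cons a w ih =>
    rw [factorCount_cons, ih fun s hs => h s (hs.trans (List.suffix_cons a w).isInfix),
      if_neg fun hE => h _ (List.take_prefix E _).isInfix (List.length_take_of_le hE.1) hE.2]

theorem factorCount_eq (hE : 0 < E) (h : ∀ s, s <:+: w → s.length = E → s ∈ S) :
    factorCount S E w = w.length + 1 - E := by
  induction w with
  | nil => simp; omega
  | cons a w ih =>
    rw [factorCount_cons, ih fun s hs => h s (hs.trans (List.suffix_cons a w).isInfix)]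
    by_cases hE' : E ≤ (a :: w).length
    · rw [if_pos ⟨hE', h _ (List.take_prefix E _).isInfix (List.length_take_of_le hE')⟩]
      simp only [List.length_cons] at hE' ⊢
      omega
    · rw [if_neg fun h => hE' h.1]
      simp only [List.length_cons] at hE' ⊢
      omega

end FactorCount

theorem List.getElem_flatten_replicate {β : Type*} {R : List β} (hR : 0 < R.length) {j p : ℕ}
    (hp : p < (List.replicate j R).flatten.length) :
    (List.replicate j R).flatten[p] = R[p % R.length]'(Nat.mod_lt _ hR) := by
  induction j generalizing p with
  | zero => simp at hp
  | succ j ih =>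
    simp only [List.replicate_succ, List.flatten_cons] at hp ⊢
    by_cases hpR : p < R.length
    · rw [List.getElem_append_left hpR]
      simp only [Nat.mod_eq_of_lt hpR]
    · rw [List.getElem_append_right (by omega), ih]
      simp only [Nat.mod_eq_sub_mod (not_lt.1 hpR)]

def periodicFactors {β : Type*} (R : List β) : Set (List β) :=
  {s | ∃ j, s <:+: (List.replicate j R).flatten}

theorem exists_getElem_eq_of_mem_periodicFactors {β : Type*} {R s : List β} (hR : 0 < R.length)
    (hs : s ∈ periodicFactors R) :
    ∃ i, ∀ t (ht : t < s.length), s[t] = R[(i + t) % R.length]'(Nat.mod_lt _ hR) := by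
  obtain ⟨j, hj⟩ := hs
  obtain ⟨i, hi, h⟩ := List.infix_iff_getElem?.1 hj
  refine ⟨i, fun t ht => ?_⟩
  have := h t ht
  rw [List.getElem?_eq_getElem (by omega), Option.some.injEq,
    List.getElem_flatten_replicate hR, add_comm] at this
  exact this.symm

/-- An arc `j, …, j + E - 1` of `ℤ/l` and the reversed arc `i + E - 1, …, i` meet in a point or
cross along an edge once `2 E > l`. -/
theorem Nat.exists_lt_add_mod_eq_or_add_one_mod_eq {l E : ℕ} (hl₀ : l ≠ 0) (hl : l < 2 * E)
    (i j : ℕ) :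
    ∃ t < E, (j + t) % l = (i + (E - 1 - t)) % l ∨ (j + t + 1) % l = (i + (E - 1 - t)) % l := by
  have : NeZero l := ⟨hl₀⟩
  set r := (((i + (E - 1) : ℕ) : ZMod l) - j).val
  have hr : (r : ZMod l) = ((i + (E - 1) : ℕ) : ZMod l) - j := ZMod.natCast_zmod_val _
  have hrl : r < l := ZMod.val_lt _
  obtain ⟨t, ht | ht⟩ := Nat.even_or_odd' r
  all_goals
    refine ⟨t, by omega, ?_⟩
    simp only [← ZMod.natCast_eq_natCast_iff', Nat.cast_add, Nat.cast_sub (by omega : t ≤ E - 1)]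
    rw [ht] at hr
    push_cast at hr
  · left; linear_combination hr
  · right; linear_combination hr

namespace FreeGroup

variable {α : Type*}

theorem IsCyclicallyReduced.getElem_mod_snd_eq_of_fst_eq {R : List (α × Bool)}
    (hR : IsCyclicallyReduced R) (hR₀ : 0 < R.length) (x : ℕ)
    (h : (R[x % R.length]'(Nat.mod_lt _ hR₀)).1 = (R[(x + 1) % R.length]'(Nat.mod_lt _ hR₀)).1) :
    (R[x % R.length]'(Nat.mod_lt _ hR₀)).2 = (R[(x + 1) % R.length]'(Nat.mod_lt _ hR₀)).2 := by
  have hx := Nat.mod_lt x hR₀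
  have hx1 : (x + 1) % R.length = (x % R.length + 1) % R.length := by simp [Nat.add_mod]
  simp only [hx1] at h ⊢
  by_cases hy : x % R.length + 1 < R.length
  · simp only [Nat.mod_eq_of_lt hy] at h ⊢
    exact List.isChain_iff_getElem.1 hR.isReduced _ hy h
  · have hy' : x % R.length = R.length - 1 := by omega
    simp only [hy', Nat.sub_add_cancel hR₀, Nat.mod_self] at h ⊢
    exact hR.2 _ (by simp [List.getLast?_eq_getElem?]) _ (by simp [List.head?_eq_getElem?]) h

theorem IsCyclicallyReduced.two_mul_length_le {R s : List (α × Bool)} (hR : IsCyclicallyReduced R)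
    (hs : s ∈ periodicFactors R) (hs' : invRev s ∈ periodicFactors R) :
    2 * s.length ≤ R.length := by
  by_contra! hlt
  have hR₀ : 0 < R.length := by
    refine List.length_pos_iff.2 fun hR' => ?_
    obtain ⟨j, hj⟩ := hs
    simp [hR', List.eq_nil_of_infix_nil] at hj
    simp [hj] at hlt
  obtain ⟨i, hi⟩ := exists_getElem_eq_of_mem_periodicFactors hR₀ hs
  obtain ⟨j, hj⟩ := exists_getElem_eq_of_mem_periodicFactors hR₀ hs'
  -- `s` sits at `i` in `R^∞` and `invRev s` at `j`; where these overlap, a letter of `R` is its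
  -- own inverse or two cyclically adjacent letters cancel.
  obtain ⟨t, ht, h | h⟩ := Nat.exists_lt_add_mod_eq_or_add_one_mod_eq hR₀.ne' hlt i j
  all_goals
    have hjt := hj t (by simpa using ht)
    simp only [invRev, List.getElem_reverse, List.getElem_map, List.length_map] at hjt
    rw [hi _ (by omega)] at hjt
  · simp only [h] at hjt
    simp [Prod.ext_iff] at hjt
  · simp only [← h] at hjt
    have := hR.getElem_mod_snd_eq_of_fst_eq hR₀ (j + t)
    simp [← hjt] at this

variable [DecidableEq α]

theorem IsReduced.exists_reduce_append_eq {u v : List (α × Bool)} (hu : IsReduced u)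
    (hv : IsReduced v) :
    ∃ p q r, u = p ++ r ∧ v = invRev r ++ q ∧ reduce (u ++ v) = p ++ q := by
  induction u using List.reverseRecOn generalizing v with
  | nil => exact ⟨[], v, [], rfl, rfl, hv.reduce_eq⟩
  | append_singleton u x ih =>
    rcases v with _ | ⟨y, v⟩
    · exact ⟨u ++ [x], [], [], by simp, rfl, by simpa using hu.reduce_eq⟩
    by_cases hxy : y = (x.1, !x.2)
    · subst hxy
      obtain ⟨p, q, r, rfl, rfl, h⟩ :=
        ih (hu.infix ⟨[], [x], rfl⟩) (hv.infix (List.suffix_cons _ v).isInfix)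
      refine ⟨p, q, r ++ [x], by simp, by simp [invRev], ?_⟩
      rw [← h]
      apply reduce.Step.eq
      simpa using Red.Step.not (L₁ := p ++ r) (L₂ := invRev r ++ q) (x := x.1) (b := x.2)
    · refine ⟨u ++ [x], y :: v, [], by simp, rfl, IsReduced.reduce_eq ?_⟩
      refine List.isChain_append.2 ⟨hu, hv, ?_⟩
      rintro _ h _ h'
      simp only [List.getLast?_concat, Option.mem_def, Option.some.injEq, List.head?_cons] at h h'
      subst h h'
      exact fun h1 => by_contra fun h2 => hxy (Prod.ext h1.symm (Bool.eq_not.2 (Ne.symm h2)))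

noncomputable def factorQuasimorphism (S : Set (List (α × Bool))) (E : ℕ) (g : FreeGroup α) : ℤ :=
  factorCount S E g.toWord - factorCount S E g⁻¹.toWord

theorem isAntisymmQuasimorphism_factorQuasimorphism (S : Set (List (α × Bool))) (E : ℕ) :
    IsAntisymmQuasimorphism (factorQuasimorphism S E) (3 * (E - 1 : ℕ)) where
  map_inv g := by simp only [factorQuasimorphism, inv_inv, neg_sub]
  abs_map_mul_sub_le a b := by
    obtain ⟨p, q, r, ha, hb, hab⟩ :=
      IsReduced.exists_reduce_append_eq (isReduced_toWord (x := a)) (isReduced_toWord (x := b))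
    simp only [factorQuasimorphism, toWord_inv, toWord_mul, hab]
    simp only [ha, hb, invRev_append, invRev_invRev]
    have bounds (u v : List (α × Bool)) :=
      And.intro (factorCount_add_factorCount_le (S := S) (E := E) u v)
        (factorCount_append_le (S := S) (E := E) u v)
    have := bounds p q
    have := bounds p r
    have := bounds (invRev r) q
    have := bounds (invRev q) (invRev p)
    have := bounds (invRev r) (invRev p)
    have := bounds (invRev q) r
    rw [abs_le]
    constructor <;> omega

theorem IsCyclicallyReduced.toWord_mk_pow {R : List (α × Bool)} (hR : IsCyclicallyReduced R)
    (n : ℕ) : (mk R ^ n).toWord = (List.replicate n R).flatten := by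
  rw [toWord_pow, toWord_mk, hR.isReduced.reduce_eq, (hR.flatten_replicate n).isReduced.reduce_eq]

theorem factorQuasimorphism_mk_pow {R : List (α × Bool)} (hR : IsCyclicallyReduced R) {E : ℕ}
    (hE₀ : 0 < E) (hE : R.length < 2 * E) (n : ℕ) :
    factorQuasimorphism (periodicFactors R) E (mk R ^ n) = (n * R.length + 1 - E : ℕ) := by
  rw [factorQuasimorphism, toWord_inv, hR.toWord_mk_pow,
    factorCount_eq (S := periodicFactors R) hE₀ fun _ hs _ => ⟨n, hs⟩,
    factorCount_eq_zero fun s hs hsE hsR => ?_]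
  · simp
  · have hs' : invRev s <:+: invRev (invRev (List.replicate n R).flatten) := (hs.map _).reverse
    rw [invRev_invRev] at hs'
    have := hR.two_mul_length_le hsR ⟨n, hs'⟩
    omega

theorem exists_isCyclicallyReduced_eq_mul_mk_mul_inv (g : FreeGroup α) :
    ∃ u R, IsCyclicallyReduced R ∧ g = u * mk R * u⁻¹ := by
  refine ⟨mk (reduceCyclically.conjugator g.toWord), reduceCyclically g.toWord,
    reduceCyclically.isCyclicallyReduced isReduced_toWord, ?_⟩
  conv_lhs =>
    rw [← mk_toWord (x := g), ← reduceCyclically.conj_conjugator_reduceCyclically g.toWord]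
  rw [inv_mk, mul_mk, mul_mk]

theorem le_six_mul_add_three_of_pow_eq_prod {g : FreeGroup α} (hg : g ≠ 1) {n m : ℕ}
    (x y : Fin m → FreeGroup α) (h : g ^ n = (List.ofFn fun i => ⁅x i, y i⁆).prod) :
    n ≤ 6 * m + 3 := by
  obtain ⟨u, R, hR, rfl⟩ := exists_isCyclicallyReduced_eq_mul_mk_mul_inv g
  have hR₀ : 0 < R.length := List.length_pos_iff.2 fun hR' => hg (by simp [hR', ← one_eq_mk])
  set k := R.length / 2
  have hφ := isAntisymmQuasimorphism_factorQuasimorphism (periodicFactors R) (k + 1)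
  have hconj := hφ.map_sub_two_mul_le_map_conj u (mk R ^ n)
  have hprod := hφ.abs_map_prod_commutatorElement_le x y
  rw [← conj_pow, h, factorQuasimorphism_mk_pow hR k.succ_pos (by omega)] at hconj
  have hnl : n * R.length ≤ 12 * (k * m) + 7 * k := by
    have : ((n * R.length + 1 - (k + 1) : ℕ) : ℤ) - 2 * (3 * k) ≤ 12 * (k * m : ℕ) := by
      have := hconj.trans (abs_le.1 hprod).2
      push_cast at this ⊢
      linarith
    omega
  have hk : 2 * k ≤ R.length := Nat.mul_div_le R.length 2
  nlinarith

end FreeGroup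

theorem scl_ge_one_div_six_freeGroup_general
    {X : Type*} (g : FreeGroup X) (hg : g ≠ 1) :
    (1 : ℝ≥0∞) / 6 ≤ scl g := by
  classical
  exact_mod_cast one_div_le_scl_of_pow_eq_prod (K := 6) (C := 3)
    fun _ _ x y h => FreeGroup.le_six_mul_add_three_of_pow_eq_prod hg x y h

theorem scl_ge_one_div_six_freeGroup
    {X : Type*} [Fintype X] (g : FreeGroup X) (hg : g ≠ 1) :
    (1 : ℝ≥0∞) / 6 ≤ scl g :=
  scl_ge_one_div_six_freeGroup_general g hg
end

section
/- Let F be a free group on a finite set, and let g be a non-trivial element of F. If n ≥ 1 and g^n is a product of m commutators in F, then m ≥ n/6 + 1/2. -/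
open scoped commutatorElement

/-!
A nontrivial `g` is conjugate to a nonempty cyclically reduced word `w` of length `L`. Lay the
periodic word `⋯www⋯` along `ℝ`, the `t`-th letter on the edge `[t/L, (t+1)/L]`. Every generator
`x` is realised by a lift of an orientation-preserving circle homeomorphism that carries the right
end of each `x`-edge to its left end and the left end of each `x⁻¹`-edge to its right end; reading
`w` from the right then carries `1` to `0`, so the image of `g` has translation number `-1`, and
that of `g ^ n` has translation number `-n`.

On the other hand a commutator `⁅a, b⁆ = (a * b) * (b * a)⁻¹` moves every point less than `2` to
the left, because `a * b` and `b * a` have the same translation number and every lift moves every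
point to within `1` of its translation number. So a product of `m` commutators has translation
number at least `-2 * m`, whence `n ≤ 2 * m`.
-/

namespace CircleDeg1Lift

local notation "τ" => translationNumber

theorem add_translationNumber_sub_one_lt (f : CircleDeg1Lift) (x : ℝ) : x + τ f - 1 < f x := by
  have := f.translationNumber_le_ceil_sub x
  have := Int.ceil_lt_add_one (f x - x)
  linarith

theorem sub_two_lt_commutatorElement_apply (a b : CircleDeg1Liftˣ) (x : ℝ) :
    x - 2 < (⁅a, b⁆ : CircleDeg1Liftˣ) x := by
  have hconj : τ (a * b : CircleDeg1Liftˣ) = τ (b * a : CircleDeg1Liftˣ) := by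
    simpa [mul_assoc] using translationNumber_conj_eq a (b * a : CircleDeg1Liftˣ)
  have hinv := translationNumber_units_inv (b * a)
  have h1 := add_translationNumber_sub_one_lt ((b * a)⁻¹ : CircleDeg1Liftˣ) x
  have h2 := add_translationNumber_sub_one_lt (a * b : CircleDeg1Liftˣ)
    (((b * a)⁻¹ : CircleDeg1Liftˣ) x)
  have hcomm : (⁅a, b⁆ : CircleDeg1Liftˣ) = a * b * (b * a)⁻¹ := by group
  rw [hcomm, Units.val_mul, mul_apply]
  linarith

theorem sub_two_mul_le_prod_commutatorElement_apply {m : ℕ} (a b : Fin m → CircleDeg1Liftˣ)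
    (x : ℝ) : x - 2 * m ≤ ((List.ofFn fun i => ⁅a i, b i⁆).prod : CircleDeg1Liftˣ) x := by
  induction m generalizing x with
  | zero => simp
  | succ m ih =>
    rw [List.ofFn_succ, List.prod_cons, Units.val_mul, mul_apply]
    have := ih (fun i => a i.succ) (fun i => b i.succ) x
    have := sub_two_lt_commutatorElement_apply (a 0) (b 0)
      (((List.ofFn fun i : Fin m => ⁅a i.succ, b i.succ⁆).prod : CircleDeg1Liftˣ) x)
    push_cast
    linarith

theorem neg_two_mul_le_translationNumber_prod_commutatorElement {m : ℕ}
    (a b : Fin m → CircleDeg1Liftˣ) :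
    -(2 * m : ℝ) ≤ τ ((List.ofFn fun i => ⁅a i, b i⁆).prod : CircleDeg1Liftˣ) :=
  le_translationNumber_of_add_le _ fun x => by
    simpa [sub_eq_add_neg] using sub_two_mul_le_prod_commutatorElement_apply a b x

end CircleDeg1Lift

namespace Int

noncomputable def piecewiseLinear (v : ℤ → ℝ) (y : ℝ) : ℝ :=
  v ⌊y⌋ + fract y * (v (⌊y⌋ + 1) - v ⌊y⌋)

variable {v : ℤ → ℝ}

@[simp]
theorem piecewiseLinear_intCast (v : ℤ → ℝ) (t : ℤ) : piecewiseLinear v t = v t := by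
  simp [piecewiseLinear]

theorem piecewiseLinear_mem_Ico (hv : StrictMono v) (y : ℝ) :
    piecewiseLinear v y ∈ Set.Ico (v ⌊y⌋) (v (⌊y⌋ + 1)) := by
  have h0 := fract_nonneg y
  have h1 := fract_lt_one y
  have hd : 0 < v (⌊y⌋ + 1) - v ⌊y⌋ := sub_pos.2 (hv (lt_add_one _))
  constructor <;> unfold piecewiseLinear <;> nlinarith

theorem strictMono_piecewiseLinear (hv : StrictMono v) : StrictMono (piecewiseLinear v) := by
  intro y z hyz
  rcases (floor_mono hyz.le).lt_or_eq with hlt | heq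
  · calc piecewiseLinear v y < v (⌊y⌋ + 1) := (piecewiseLinear_mem_Ico hv y).2
      _ ≤ v ⌊z⌋ := hv.monotone hlt
      _ ≤ piecewiseLinear v z := (piecewiseLinear_mem_Ico hv z).1
  · have hd : 0 < v (⌊y⌋ + 1) - v ⌊y⌋ := sub_pos.2 (hv (lt_add_one _))
    have hfract : fract y < fract z := by
      simp only [fract, heq]
      linarith
    simp only [piecewiseLinear, heq] at hd ⊢
    nlinarith

theorem piecewiseLinear_add_intCast {L : ℤ} {c : ℝ} (hper : ∀ t, v (t + L) = v t + c) (y : ℝ) :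
    piecewiseLinear v (y + L) = piecewiseLinear v y + c := by
  simp only [piecewiseLinear, floor_add_intCast, fract_add_intCast, add_right_comm _ L 1, hper]
  ring

theorem exists_apply_le_lt_apply_add_one {z : ℝ} (hv : Monotone v) (hbot : ∃ t, v t ≤ z)
    (htop : ∃ t, z < v t) : ∃ t, v t ≤ z ∧ z < v (t + 1) := by
  obtain ⟨s, hs⟩ := htop
  have hbdd : ∃ b, ∀ t, v t ≤ z → t ≤ b :=
    ⟨s, fun t ht => le_of_lt (hv.reflect_lt (ht.trans_lt hs))⟩
  obtain ⟨t, ht, hmax⟩ := exists_greatest_of_bdd hbdd hbot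
  exact ⟨t, ht, not_le.1 fun h => (lt_add_one t).not_ge (hmax _ h)⟩

theorem surjective_piecewiseLinear (hv : StrictMono v) (hbot : ∀ z, ∃ t, v t ≤ z)
    (htop : ∀ z, ∃ t, z < v t) : Function.Surjective (piecewiseLinear v) := by
  intro z
  obtain ⟨t, hle, hlt⟩ := exists_apply_le_lt_apply_add_one hv.monotone (hbot z) (htop z)
  set s := (z - v t) / (v (t + 1) - v t)
  have hd : 0 < v (t + 1) - v t := sub_pos.2 (hv (lt_add_one t))
  have hs0 : 0 ≤ s := div_nonneg (sub_nonneg.2 hle) hd.le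
  have hs1 : s < 1 := (div_lt_one hd).2 (by linarith)
  have hfloor : ⌊(t : ℝ) + s⌋ = t := by
    rw [floor_intCast_add, floor_eq_zero_iff.2 ⟨hs0, hs1⟩, add_zero]
  refine ⟨t + s, ?_⟩
  rw [piecewiseLinear, hfloor, fract_intCast_add, fract_eq_self.2 ⟨hs0, hs1⟩,
    div_mul_cancel₀ _ hd.ne']
  ring

theorem exists_apply_le_and_exists_lt_apply {L : ℕ} (hper : ∀ t, v (t + L) = v t + 1) (z : ℝ) :
    (∃ t, v t ≤ z) ∧ ∃ t, z < v t := by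
  have hper_nat : ∀ (k : ℕ) t, v (t + k * L) = v t + k := by
    intro k
    induction k with
    | zero => simp
    | succ k ih => intro t; push_cast; rw [add_one_mul, ← add_assoc, hper, ih]; ring
  constructor
  · refine ⟨-(⌈v 0 - z⌉₊ * L : ℕ), ?_⟩
    have := hper_nat ⌈v 0 - z⌉₊ (-(⌈v 0 - z⌉₊ * L : ℕ))
    push_cast at this ⊢
    rw [neg_add_cancel] at this
    linarith [Nat.le_ceil (v 0 - z)]
  · refine ⟨(⌈z - v 0⌉₊ + 1) * L, ?_⟩
    have := hper_nat (⌈z - v 0⌉₊ + 1) 0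
    push_cast at this ⊢
    rw [zero_add] at this
    linarith [Nat.le_ceil (z - v 0)]

end Int

namespace CircleDeg1Lift

theorem exists_units_apply_div_eq {L : ℕ} {v : ℤ → ℝ} (hv : StrictMono v)
    (hper : ∀ t, v (t + L) = v t + 1) : ∃ f : CircleDeg1Liftˣ, ∀ t : ℤ, f (t / L) = v t := by
  have hL : (0 : ℝ) < L := by
    rcases L.eq_zero_or_pos with rfl | hL
    · simpa using hper 0
    · exact_mod_cast hL
  let f : CircleDeg1Lift :=
    { toFun := fun y => Int.piecewiseLinear v (L * y)
      monotone' := (Int.strictMono_piecewiseLinear hv).monotone.comp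
        (monotone_mul_left_of_nonneg hL.le)
      map_add_one' := fun y => by
        simpa [mul_add] using
          Int.piecewiseLinear_add_intCast (L := L) (by exact_mod_cast hper) (L * y) }
  have hf : ∀ y, f y = Int.piecewiseLinear v (L * y) := fun _ => rfl
  have hbij : Function.Bijective f := by
    refine ⟨((Int.strictMono_piecewiseLinear hv).comp (strictMono_mul_left_of_pos hL)).injective,
      fun z => ?_⟩
    obtain ⟨y, hy⟩ := Int.surjective_piecewiseLinear hv
      (fun z => (Int.exists_apply_le_and_exists_lt_apply hper z).1)
      (fun z => (Int.exists_apply_le_and_exists_lt_apply hper z).2) z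
    exact ⟨y / L, by rw [hf, mul_div_cancel₀ _ hL.ne']; exact hy⟩
  refine ⟨(isUnit_iff_bijective.2 hbij).unit, fun t => ?_⟩
  change f _ = _
  rw [hf, mul_div_cancel₀ _ hL.ne', Int.piecewiseLinear_intCast]

end CircleDeg1Lift

namespace FreeGroup

variable {X : Type*}

theorem IsCyclicallyReduced.exists_periodic {w : List (X × Bool)} (hw : IsCyclicallyReduced w)
    (hne : w ≠ []) :
    ∃ a : ℤ → X × Bool, (∀ t, a (t + w.length) = a t) ∧
      (∀ t, (a t).1 = (a (t + 1)).1 → (a t).2 = (a (t + 1)).2) ∧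
      (List.range w.length).map (fun i : ℕ => a i) = w := by
  have hL : (0 : ℤ) < w.length := by simpa [List.length_pos_iff] using hne
  let a : ℤ → X × Bool := fun t => w.getD (t % w.length).toNat (w.head hne)
  have ha_nat : ∀ j : ℕ, a j = w.getD (j % w.length) (w.head hne) := fun j => by
    simp only [a, ← Int.natCast_mod, Int.toNat_natCast]
  have ha_append : ∀ j : ℕ, j ≤ w.length → a j = (w ++ w).getD j (w.head hne) := fun j hj => by
    rw [ha_nat]
    rcases hj.lt_or_eq with hj | rfl
    · rw [Nat.mod_eq_of_lt hj, List.getD_append _ _ _ _ hj]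
    · rw [Nat.mod_self, List.getD_append_right _ _ _ _ le_rfl, Nat.sub_self]
  refine ⟨a, fun t => ?_, fun t => ?_, ?_⟩
  · simp only [a, ← Int.emod_eq_add_self_emod]
  · -- the letters at `t` and `t + 1` are adjacent in `w ++ w`
    obtain ⟨i, hi⟩ : ∃ i : ℕ, t % w.length = i :=
      ⟨(t % w.length).toNat, (Int.toNat_of_nonneg (Int.emod_nonneg t hL.ne')).symm⟩
    have hiL : i < w.length := by have := Int.emod_lt_of_pos t hL; omega
    have h1 : a t = (w ++ w)[i]'(by simp; omega) := by
      rw [← List.getD_eq_getElem _ (w.head hne), ← ha_append i hiL.le]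
      simp only [a, hi, Int.toNat_natCast, ← Int.natCast_mod, Nat.mod_eq_of_lt hiL]
    have h2 : a (t + 1) = (w ++ w)[i + 1]'(by simp; omega) := by
      rw [← List.getD_eq_getElem _ (w.head hne), ← ha_append (i + 1) hiL]
      simp only [a, ← Int.emod_add_emod t, hi]
      push_cast
      rfl
    rw [h1, h2]
    have hred : IsReduced (w ++ w) := by
      simpa using (hw.flatten_replicate 2).isReduced
    exact hred.getElem i _
  · apply List.ext_getElem (by simp)
    intro i h _
    simp only [List.getElem_map, List.getElem_range, ha_nat]
    rw [Nat.mod_eq_of_lt (by simpa using h), List.getD_eq_getElem]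

variable {a : ℤ → X × Bool} {L : ℕ}

theorem map_mk_map_range_apply {ρ : FreeGroup X →* CircleDeg1Liftˣ}
    (hρ : ∀ t : ℤ, ρ (mk [a t]) ((t + 1) / L) = t / L) (k : ℕ) (s : ℤ) :
    ρ (mk ((List.range k).map fun i : ℕ => a (s + i))) ((s + k) / L) = s / L := by
  induction k generalizing s with
  | zero => simp [← one_eq_mk]
  | succ k ih =>
    rw [List.range_succ_eq_map, List.map_cons, List.map_map, ← List.singleton_append, ← mul_mk,
      _root_.map_mul, Units.val_mul, CircleDeg1Lift.mul_apply]
    have hshift : (fun i : ℕ => a (s + i)) ∘ Nat.succ = fun i : ℕ => a ((s + 1 : ℤ) + i) := by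
      funext i
      simp only [Function.comp_apply, Nat.cast_succ]
      ring_nf
    have hpt : ((s : ℝ) + (k + 1 : ℕ)) = ((s + 1 : ℤ) : ℝ) + k := by push_cast; ring
    rw [hshift, hpt, ih, Nat.cast_zero, add_zero]
    push_cast
    exact hρ s

variable [DecidableEq X]

/-- The image of the generator `x` will send `t / L` to `(t + generatorShift a x t) / L`: the right
end `t` of an `x`-edge goes to `t - 1`, the left end `t` of an `x⁻¹`-edge to `t + 1`. The offsets
`∓1/3` just before and after these points keep the knots strictly increasing. -/
noncomputable def generatorShift (a : ℤ → X × Bool) (x : X) (t : ℤ) : ℝ :=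
  if a (t - 1) = (x, true) then -1
  else if a t = (x, false) then 1
  else if a t = (x, true) then -1 / 3
  else if a (t - 1) = (x, false) then 1 / 3
  else 0

theorem generatorShift_of_eq_true {x : X} {t : ℤ} (h : a (t - 1) = (x, true)) :
    generatorShift a x t = -1 :=
  if_pos h

theorem generatorShift_of_eq_false
    (hred : ∀ t, (a t).1 = (a (t + 1)).1 → (a t).2 = (a (t + 1)).2)
    {x : X} {t : ℤ} (h : a t = (x, false)) : generatorShift a x t = 1 := by
  have : a (t - 1) ≠ (x, true) := fun h' => by
    simpa [h, h'] using hred (t - 1)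
  simp [generatorShift, this, h]

theorem generatorShift_lt (hred : ∀ t, (a t).1 = (a (t + 1)).1 → (a t).2 = (a (t + 1)).2)
    (x : X) (t : ℤ) : generatorShift a x t < generatorShift a x (t + 1) + 1 := by
  have := hred t
  unfold generatorShift
  simp only [add_sub_cancel_right]
  split_ifs <;> simp_all <;> norm_num

theorem generatorShift_add {L : ℤ} (hper : ∀ t, a (t + L) = a t) (x : X) (t : ℤ) :
    generatorShift a x (t + L) = generatorShift a x t := by
  simp only [generatorShift, add_sub_right_comm t L, hper]

theorem exists_monoidHom_mk_singleton_apply (hL : 0 < L) (hper : ∀ t, a (t + L) = a t)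
    (hred : ∀ t, (a t).1 = (a (t + 1)).1 → (a t).2 = (a (t + 1)).2) :
    ∃ ρ : FreeGroup X →* CircleDeg1Liftˣ, ∀ t : ℤ, ρ (mk [a t]) ((t + 1) / L) = t / L := by
  have hL' : (0 : ℝ) < L := by exact_mod_cast hL
  have hgen : ∀ x, ∃ f : CircleDeg1Liftˣ, ∀ t : ℤ,
      f (t / L) = (t + generatorShift a x t) / L := by
    intro x
    refine CircleDeg1Lift.exists_units_apply_div_eq
      (strictMono_int_of_lt_succ fun t => ?_) fun t => ?_
    · have := generatorShift_lt hred x t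
      push_cast
      gcongr ?_ / _
      linarith
    · rw [generatorShift_add (L := (L : ℤ)) hper]
      push_cast
      field_simp
      ring
  choose f hf using hgen
  refine ⟨lift f, fun t => ?_⟩
  rcases hat : a t with ⟨x, _ | _⟩
  · have := hf x t
    rw [generatorShift_of_eq_false hred hat] at this
    simp only [lift_mk, List.map_cons, List.map_nil, cond_false, List.prod_singleton]
    rw [← this, CircleDeg1Lift.units_inv_apply_apply]
  · have := hf x (t + 1)
    rw [generatorShift_of_eq_true (by rwa [add_sub_cancel_right])] at this
    simp only [lift_mk, List.map_cons, List.map_nil, cond_true, List.prod_singleton]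
    push_cast at this
    rw [this]
    ring_nf

theorem IsCyclicallyReduced.exists_translationNumber_mk_eq_neg_one {w : List (X × Bool)}
    (hw : IsCyclicallyReduced w) (hne : w ≠ []) :
    ∃ ρ : FreeGroup X →* CircleDeg1Liftˣ, (ρ (mk w) : CircleDeg1Lift).translationNumber = -1 := by
  obtain ⟨a, hper, hred, hw_eq⟩ := hw.exists_periodic hne
  have hL := List.length_pos_iff.2 hne
  obtain ⟨ρ, hρ⟩ := exists_monoidHom_mk_singleton_apply hL hper hred
  have hw1 : (ρ (mk w) : CircleDeg1Lift) 1 = 1 + ((-1 : ℤ) : ℝ) := by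
    have := map_mk_map_range_apply hρ w.length 0
    simp only [zero_add, Int.cast_zero, zero_div, hw_eq] at this
    rw [div_self (by exact_mod_cast hL.ne')] at this
    push_cast
    linarith
  exact ⟨ρ, by simpa using CircleDeg1Lift.translationNumber_of_eq_add_int _ hw1⟩

theorem exists_isCyclicallyReduced_conj {g : FreeGroup X} (hg : g ≠ 1) :
    ∃ u w, IsCyclicallyReduced w ∧ w ≠ [] ∧ g = u * mk w * u⁻¹ := by
  set u := mk (reduceCyclically.conjugator g.toWord)
  have hconj : g = u * mk (reduceCyclically g.toWord) * u⁻¹ := by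
    rw [inv_mk, mul_mk, mul_mk, reduceCyclically.conj_conjugator_reduceCyclically, mk_toWord]
  refine ⟨u, _, reduceCyclically.isCyclicallyReduced isReduced_toWord, fun hnil => hg ?_, hconj⟩
  rw [hconj, hnil, ← one_eq_mk, mul_one, mul_inv_cancel]

theorem exists_translationNumber_eq_neg_one {g : FreeGroup X} (hg : g ≠ 1) :
    ∃ ρ : FreeGroup X →* CircleDeg1Liftˣ, (ρ g : CircleDeg1Lift).translationNumber = -1 := by
  obtain ⟨u, w, hw, hne, rfl⟩ := exists_isCyclicallyReduced_conj hg
  obtain ⟨ρ, hρ⟩ := hw.exists_translationNumber_mk_eq_neg_one hne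
  refine ⟨ρ, ?_⟩
  rw [_root_.map_mul, _root_.map_mul, _root_.map_inv, Units.val_mul, Units.val_mul,
    CircleDeg1Lift.translationNumber_conj_eq, hρ]

end FreeGroup

theorem comm_count_ge_of_pow_eq_prod_commutators_freeGroup_general
    {X : Type*} (g : FreeGroup X) (hg : g ≠ 1)
    (n m : ℕ) (hn : 1 ≤ n)
    (h : ∃ x y : Fin m → FreeGroup X, g ^ n = (List.ofFn fun i => ⁅x i, y i⁆).prod) :
    (n : ℝ) / 6 + 1 / 2 ≤ m := by
  classical
  obtain ⟨x, y, hxy⟩ := h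
  obtain ⟨ρ, hρ⟩ := FreeGroup.exists_translationNumber_eq_neg_one hg
  have hmap : ρ (g ^ n) = (List.ofFn fun i => ⁅ρ (x i), ρ (y i)⁆).prod := by
    simp [hxy, map_list_prod, List.map_ofFn, Function.comp_def]
  have hbound := CircleDeg1Lift.neg_two_mul_le_translationNumber_prod_commutatorElement
    (fun i => ρ (x i)) (fun i => ρ (y i))
  rw [← hmap, map_pow, Units.val_pow_eq_pow_val, CircleDeg1Lift.translationNumber_pow, hρ]
    at hbound
  have hnm : (n : ℝ) ≤ 2 * m := by linarith
  have hm : (1 : ℝ) ≤ m := by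
    have : n ≤ 2 * m := by exact_mod_cast hnm
    exact_mod_cast (by omega : 1 ≤ m)
  linarith

theorem comm_count_ge_of_pow_eq_prod_commutators_freeGroup
    {X : Type*} [Fintype X] (g : FreeGroup X) (hg : g ≠ 1)
    (n m : ℕ) (hn : 1 ≤ n)
    (h : ∃ x y : Fin m → FreeGroup X, g ^ n = (List.ofFn fun i => ⁅x i, y i⁆).prod) :
    (n : ℝ) / 6 + 1 / 2 ≤ m :=
  comm_count_ge_of_pow_eq_prod_commutators_freeGroup_general g hg n m hn h
end

section
/- Let Γ be a finite simple graph and A(Γ) the right-angled Artin group defined by Γ. For every g ∈ A(Γ) and every n > 0, the minimal word length (with respect to the generators V(Γ) and their inverses) among all elements conjugate to g^n equals n times the minimal word length among all elements conjugate to g. -/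
/-- The defining relators of a right-angled Artin group: one commutator for each
edge of the graph. -/
def raagRels {V : Type*} (Γ : SimpleGraph V) : Set (FreeGroup V) :=
  {r | ∃ a b : V, Γ.Adj a b ∧
    r = FreeGroup.of a * FreeGroup.of b * (FreeGroup.of a)⁻¹ * (FreeGroup.of b)⁻¹}

/-- The right-angled Artin group defined by the graph `Γ`. -/
abbrev RAAG {V : Type*} (Γ : SimpleGraph V) : Type _ :=
  PresentedGroup (raagRels Γ)

/-- The element of the right-angled Artin group spelled by a word in the
generators and their inverses. -/
def spellRAAG {V : Type*} (Γ : SimpleGraph V) (w : List (V × Bool)) : RAAG Γ :=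
  PresentedGroup.mk (raagRels Γ) (FreeGroup.mk w)

/-- The minimal word length among all elements conjugate to `g`: the least
length of a word in the generators and their inverses spelling an element
conjugate to `g`. -/
noncomputable def minConjWordLength {V : Type*} (Γ : SimpleGraph V) (g : RAAG Γ) : ℕ :=
  sInf {l : ℕ | ∃ w : List (V × Bool), IsConj g (spellRAAG Γ w) ∧ w.length = l}

/-!
Call a word reduced if no letter `x` can be shuffled, past letters commuting with it, next to an
`x⁻¹`. The group acts on reduced words modulo shuffling, each generator by multiplying on the left
and cancelling if possible; reading off the image of the empty word shows that two reduced words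
spelling the same element are shuffle equivalent, so reduced words are geodesics.

If `w` is a shortest word conjugate to `g`, then every power `wᵏ` is reduced: a cancellation in
`wᵏ` either fits in one period of a cyclic rotation of `w`, which is conjugate to `w` and would get
shorter, or spans a whole period and hence crosses a copy of its own first letter. So if `v` is a
shortest word conjugate to `gⁿ`, say `u⁻¹ v u` spells `wⁿ`, then `u⁻¹ vᵏ u` spells the geodesic
`wⁿᵏ` and `n k |w| ≤ k |v| + 2 |u|` for every `k`, whence `n |w| ≤ |v|`; the word `wⁿ` gives the
reverse inequality.
-/

section Words

variable {α : Type*}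

theorem List.infix_pair_of_swap {b c X Y : α} {u r : List α} (hbX : b ≠ X) (hbY : b ≠ Y)
    (hcX : c ≠ X) (h : [b, c] <:+: u ++ X :: Y :: r) : [b, c] <:+: u ++ Y :: X :: r := by
  obtain ⟨p, s, h⟩ := h
  simp only [List.append_assoc, List.cons_append, List.nil_append] at h
  rcases List.append_eq_append_iff.1 h with ⟨as, rfl, has⟩ | ⟨bs, rfl, hbs⟩
  · rcases as with _ | ⟨a1, _ | ⟨a2, as⟩⟩ <;>
      simp only [List.nil_append, List.cons_append, List.cons.injEq] at has
    · exact absurd has.1 hbX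
    · exact absurd has.2.1 hcX
    · obtain ⟨rfl, rfl, rfl⟩ := has
      exact ⟨p, as ++ Y :: X :: r, by simp⟩
  · rcases bs with _ | ⟨a1, _ | ⟨a2, bs⟩⟩ <;>
      simp only [List.nil_append, List.cons_append, List.cons.injEq] at hbs
    · exact absurd hbs.1.symm hbX
    · exact absurd hbs.2.1.symm hbY
    · obtain ⟨rfl, rfl, rfl⟩ := hbs
      exact ⟨u ++ Y :: X :: bs, s, by simp⟩

def wordPow (w : List α) (k : ℕ) : List α := (List.replicate k w).flatten

@[simp] lemma wordPow_zero (w : List α) : wordPow w 0 = [] := rfl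

lemma wordPow_succ (w : List α) (k : ℕ) : wordPow w (k + 1) = w ++ wordPow w k := rfl

@[simp] lemma length_wordPow (w : List α) (k : ℕ) : (wordPow w k).length = k * w.length := by
  simp [wordPow, List.sum_replicate]

lemma wordPow_append_append (u v : List α) (k : ℕ) :
    wordPow (u ++ v) k ++ u = u ++ wordPow (v ++ u) k := by
  induction k with
  | zero => simp
  | succ k ih => simp [wordPow_succ, ih]

lemma wordPow_append_self (w : List α) (k : ℕ) : wordPow w k ++ w = w ++ wordPow w k := by
  simpa using wordPow_append_append w [] k

lemma exists_wordPow_rotate_of_wordPow_eq_append {w p s : List α} {k : ℕ}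
    (h : wordPow w k = p ++ s) : ∃ u v, w = u ++ v ∧ ∃ K, s ++ u = wordPow (v ++ u) K := by
  induction k generalizing p with
  | zero =>
    obtain ⟨-, rfl⟩ := List.append_eq_nil_iff.1 h.symm
    exact ⟨[], w, rfl, 0, by simp⟩
  | succ k ih =>
    rw [wordPow_succ, List.append_eq_append_iff] at h
    rcases h with ⟨a, -, ha⟩ | ⟨c, rfl, rfl⟩
    · exact ih ha
    · refine ⟨p, c, rfl, k + 1, ?_⟩
      rw [wordPow_succ, List.append_assoc, wordPow_append_append, List.append_assoc]

end Words

namespace RAAG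

variable {V : Type*} {Γ : SimpleGraph V}

def invLetter (x : V × Bool) : V × Bool := (x.1, !x.2)

@[simp] lemma invLetter_fst (x : V × Bool) : (invLetter x).1 = x.1 := rfl

@[simp] lemma invLetter_invLetter (x : V × Bool) : invLetter (invLetter x) = x := by
  simp [invLetter]

lemma ne_invLetter (x : V × Bool) : x ≠ invLetter x := by
  simp [invLetter, Prod.ext_iff]

lemma ne_of_adj {x y : V × Bool} (h : Γ.Adj x.1 y.1) : x ≠ y :=
  fun e => Γ.irrefl (e ▸ h)

inductive Swap (Γ : SimpleGraph V) : List (V × Bool) → List (V × Bool) → Prop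
  | swap (u v : List (V × Bool)) {x y : V × Bool} (h : Γ.Adj x.1 y.1) :
      Swap Γ (u ++ x :: y :: v) (u ++ y :: x :: v)

def ShuffleEquiv (Γ : SimpleGraph V) : List (V × Bool) → List (V × Bool) → Prop :=
  Relation.EqvGen (Swap Γ)

namespace ShuffleEquiv

@[refl] lemma refl (w : List (V × Bool)) : ShuffleEquiv Γ w w := Relation.EqvGen.refl w

lemma symm {w v : List (V × Bool)} (h : ShuffleEquiv Γ w v) : ShuffleEquiv Γ v w :=
  Relation.EqvGen.symm _ _ h

lemma trans {w v u : List (V × Bool)} (h : ShuffleEquiv Γ w v)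
    (h' : ShuffleEquiv Γ v u) : ShuffleEquiv Γ w u :=
  Relation.EqvGen.trans _ _ _ h h'

lemma of_swap {w v : List (V × Bool)} (h : Swap Γ w v) : ShuffleEquiv Γ w v :=
  Relation.EqvGen.rel _ _ h

lemma swap {x y : V × Bool} (h : Γ.Adj x.1 y.1) (w : List (V × Bool)) :
    ShuffleEquiv Γ (x :: y :: w) (y :: x :: w) :=
  of_swap (Swap.swap [] w h)

lemma append_left {w v : List (V × Bool)} (u : List (V × Bool)) (h : ShuffleEquiv Γ w v) :
    ShuffleEquiv Γ (u ++ w) (u ++ v) := by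
  induction h with
  | rel _ _ h =>
    cases h with
    | swap u' v' h => simpa using of_swap (Swap.swap (u ++ u') v' h)
  | refl => rfl
  | symm _ _ _ ih => exact ih.symm
  | trans _ _ _ _ _ ih ih' => exact ih.trans ih'

lemma cons {w v : List (V × Bool)} (x : V × Bool) (h : ShuffleEquiv Γ w v) :
    ShuffleEquiv Γ (x :: w) (x :: v) :=
  h.append_left [x]

lemma length_eq {w v : List (V × Bool)} (h : ShuffleEquiv Γ w v) : w.length = v.length := by
  induction h with
  | rel _ _ h => cases h; simp
  | refl => rfl
  | symm _ _ _ ih => exact ih.symm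
  | trans _ _ _ _ _ ih ih' => exact ih.trans ih'

lemma append_cons_of_forall_adj {y : V × Bool} {m : List (V × Bool)}
    (h : ∀ z ∈ m, Γ.Adj y.1 z.1) (s : List (V × Bool)) :
    ShuffleEquiv Γ (m ++ y :: s) (y :: (m ++ s)) := by
  induction m with
  | nil => rfl
  | cons z m ih =>
    have hm : ∀ z ∈ m, Γ.Adj y.1 z.1 := fun z hz => h z (List.mem_cons_of_mem _ hz)
    exact ((ih hm).cons z).trans (swap (h z List.mem_cons_self).symm _)

/-- The two letters of a swap are never equal, so erasing the first occurrence of a letter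
respects swaps. -/
lemma erase [DecidableEq V] {w v : List (V × Bool)} (h : ShuffleEquiv Γ w v) (y : V × Bool) :
    ShuffleEquiv Γ (w.erase y) (v.erase y) := by
  induction h with
  | rel _ _ h =>
    obtain @⟨u, v, x, z, hxz⟩ := h
    by_cases hu : y ∈ u
    · simpa [List.erase_append_left _ hu] using of_swap (Swap.swap (u.erase y) v hxz)
    rw [List.erase_append_right _ hu, List.erase_append_right _ hu]
    refine append_left u ?_
    by_cases hx : x = y
    · subst hx; simpa [(ne_of_adj hxz).symm] using refl (z :: v)
    by_cases hz : z = y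
    · subst hz; simpa [ne_of_adj hxz] using refl (x :: v)
    simpa [List.erase_cons, hx, hz] using swap hxz (v.erase y)
  | refl => rfl
  | symm _ _ _ ih => exact ih.symm
  | trans _ _ _ _ _ ih ih' => exact ih.trans ih'

lemma cancel_left {x : V × Bool} {w v : List (V × Bool)}
    (h : ShuffleEquiv Γ (x :: w) (x :: v)) : ShuffleEquiv Γ w v := by
  classical
  simpa using h.erase x

end ShuffleEquiv

section Spelling

variable (Γ)

@[simp] lemma spellRAAG_nil : spellRAAG Γ [] = 1 := map_one _

lemma spellRAAG_append (u v : List (V × Bool)) :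
    spellRAAG Γ (u ++ v) = spellRAAG Γ u * spellRAAG Γ v := by
  simp [spellRAAG, ← FreeGroup.mul_mk]

lemma spellRAAG_cons (x : V × Bool) (w : List (V × Bool)) :
    spellRAAG Γ (x :: w) = spellRAAG Γ [x] * spellRAAG Γ w :=
  spellRAAG_append Γ [x] w

lemma spellRAAG_invRev (w : List (V × Bool)) :
    spellRAAG Γ (FreeGroup.invRev w) = (spellRAAG Γ w)⁻¹ := by
  simp [spellRAAG, ← FreeGroup.inv_mk]

lemma spellRAAG_invLetter (x : V × Bool) :
    spellRAAG Γ [invLetter x] = (spellRAAG Γ [x])⁻¹ := by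
  simpa [FreeGroup.invRev, invLetter] using spellRAAG_invRev Γ [x]

lemma spellRAAG_surjective : Function.Surjective (spellRAAG Γ) := fun g => by
  classical
  obtain ⟨x, rfl⟩ := PresentedGroup.mk_surjective _ g
  exact ⟨x.toWord, by rw [spellRAAG, FreeGroup.mk_toWord]⟩

@[simp] lemma spellRAAG_cons_invLetter_cons (x : V × Bool) (w : List (V × Bool)) :
    spellRAAG Γ (x :: invLetter x :: w) = spellRAAG Γ w := by
  rw [spellRAAG_cons Γ x, spellRAAG_cons Γ (invLetter x), spellRAAG_invLetter,
    mul_inv_cancel_left]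

variable {Γ}

lemma commute_of_adj {a b : V} (h : Γ.Adj a b) :
    Commute (PresentedGroup.of a : RAAG Γ) (PresentedGroup.of b) := by
  have := PresentedGroup.one_of_mem (rels := raagRels Γ) ⟨a, b, h, rfl⟩
  simp only [map_mul, map_inv] at this
  rwa [mul_inv_eq_one, mul_inv_eq_iff_eq_mul] at this

lemma commute_spellRAAG_of_adj {x y : V × Bool} (h : Γ.Adj x.1 y.1) :
    Commute (spellRAAG Γ [x]) (spellRAAG Γ [y]) := by
  have hpos (a : V) : spellRAAG Γ [(a, true)] = PresentedGroup.of a := rfl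
  have hneg (a : V) : spellRAAG Γ [(a, false)] = (PresentedGroup.of a)⁻¹ :=
    spellRAAG_invLetter Γ (a, true)
  obtain ⟨a, _ | _⟩ := x <;> obtain ⟨b, _ | _⟩ := y <;> simp [hpos, hneg, commute_of_adj h]

lemma ShuffleEquiv.spellRAAG_eq {w v : List (V × Bool)} (h : ShuffleEquiv Γ w v) :
    spellRAAG Γ w = spellRAAG Γ v := by
  induction h with
  | rel _ _ h =>
    obtain @⟨u, v, x, y, hxy⟩ := h
    rw [spellRAAG_append, spellRAAG_append, spellRAAG_cons Γ x (y :: v), spellRAAG_cons Γ y v,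
      spellRAAG_cons Γ y (x :: v), spellRAAG_cons Γ x v, (commute_spellRAAG_of_adj hxy).left_comm]
  | refl => rfl
  | symm _ _ _ ih => exact ih.symm
  | trans _ _ _ _ _ ih ih' => exact ih.trans ih'

end Spelling

section Reduced

def HasCancellation (Γ : SimpleGraph V) (w : List (V × Bool)) : Prop :=
  ∃ p x m s, w = p ++ x :: (m ++ invLetter x :: s) ∧ ∀ z ∈ m, Γ.Adj x.1 z.1

def IsReduced (Γ : SimpleGraph V) (w : List (V × Bool)) : Prop := ¬ HasCancellation Γ w

lemma isReduced_nil : IsReduced Γ [] := by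
  rintro ⟨p, x, m, s, h, -⟩
  simp at h

lemma hasCancellation_cons_invLetter (x : V × Bool) (w : List (V × Bool)) :
    HasCancellation Γ (x :: invLetter x :: w) :=
  ⟨[], x, [], w, rfl, by simp⟩

lemma HasCancellation.cons {w : List (V × Bool)} (h : HasCancellation Γ w) (y : V × Bool) :
    HasCancellation Γ (y :: w) := by
  obtain ⟨p, x, m, s, rfl, hm⟩ := h
  exact ⟨y :: p, x, m, s, rfl, hm⟩

lemma IsReduced.of_cons {y : V × Bool} {w : List (V × Bool)} (h : IsReduced Γ (y :: w)) :
    IsReduced Γ w :=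
  fun hw => h (hw.cons y)

lemma HasCancellation.exists_shorter {w : List (V × Bool)} (h : HasCancellation Γ w) :
    ∃ v, spellRAAG Γ v = spellRAAG Γ w ∧ v.length + 2 = w.length := by
  obtain ⟨p, x, m, s, rfl, hm⟩ := h
  refine ⟨p ++ (m ++ s), ?_, by simp; omega⟩
  have hmove := ShuffleEquiv.append_cons_of_forall_adj (y := invLetter x) hm s
  rw [spellRAAG_append Γ p, spellRAAG_append Γ p, spellRAAG_cons Γ x, hmove.spellRAAG_eq,
    ← spellRAAG_cons, spellRAAG_cons_invLetter_cons]

lemma exists_isReduced (w : List (V × Bool)) :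
    ∃ v, IsReduced Γ v ∧ spellRAAG Γ v = spellRAAG Γ w ∧ v.length ≤ w.length := by
  induction hw : w.length using Nat.strong_induction_on generalizing w with
  | _ n ih =>
    by_cases h : HasCancellation Γ w
    · obtain ⟨v, hv, hlen⟩ := h.exists_shorter
      obtain ⟨v', hred, hv', hlen'⟩ := ih v.length (by omega) v rfl
      exact ⟨v', hred, hv'.trans hv, by omega⟩
    · exact ⟨w, h, rfl, hw.le⟩

/-- A cancellation of `a`-letters is a pair of consecutive letters `x, x⁻¹` of this projection,
on which a swap acts at most by transposing two letters that are not `a`-letters. -/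
noncomputable def eraseLink (Γ : SimpleGraph V) (a : V) (w : List (V × Bool)) :
    List (V × Bool) :=
  open scoped Classical in w.filter fun z => ¬ Γ.Adj a z.1

lemma hasCancellation_iff_infix_eraseLink {w : List (V × Bool)} :
    HasCancellation Γ w ↔ ∃ x, [x, invLetter x] <:+: eraseLink Γ x.1 w := by
  constructor
  · rintro ⟨p, x, m, s, rfl, hm⟩
    refine ⟨x, eraseLink Γ x.1 p, eraseLink Γ x.1 s, ?_⟩
    have : eraseLink Γ x.1 m = [] := List.filter_eq_nil_iff.2 (by simpa using hm)
    simp_all [eraseLink, List.filter_append]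
  · rintro ⟨x, p, s, h⟩
    rw [List.append_assoc, eraseLink, List.append_eq_filter_iff] at h
    obtain ⟨l, l', rfl, -, h⟩ := h
    obtain ⟨a, l'', rfl, -, -, h⟩ := List.filter_eq_cons_iff.1 h
    obtain ⟨m, s', rfl, hm, -, -⟩ := List.filter_eq_cons_iff.1 h
    exact ⟨l ++ a, x, m, s', by simp, by simpa using hm⟩

lemma Swap.hasCancellation {w v : List (V × Bool)} (hs : Swap Γ w v)
    (h : HasCancellation Γ w) : HasCancellation Γ v := by
  rw [hasCancellation_iff_infix_eraseLink] at h ⊢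
  obtain ⟨x, hx⟩ := h
  refine ⟨x, ?_⟩
  obtain @⟨u, r, X, Y, hXY⟩ := hs
  by_cases hX : Γ.Adj x.1 X.1
  · simpa [eraseLink, List.filter_append, List.filter_cons, hX] using hx
  by_cases hY : Γ.Adj x.1 Y.1
  · simpa [eraseLink, List.filter_append, List.filter_cons, hY] using hx
  have hxX (y : V × Bool) (hy : y.1 = x.1) : y ≠ X := by
    rintro rfl; exact hY (hy ▸ hXY)
  have hxY (y : V × Bool) (hy : y.1 = x.1) : y ≠ Y := by
    rintro rfl; exact hX (hy ▸ hXY.symm)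
  simp only [eraseLink, List.filter_append, List.filter_cons, hX, hY] at hx ⊢
  exact List.infix_pair_of_swap (hxX x rfl) (hxY x rfl) (hxX _ rfl) hx

lemma ShuffleEquiv.hasCancellation_iff {w v : List (V × Bool)} (h : ShuffleEquiv Γ w v) :
    HasCancellation Γ w ↔ HasCancellation Γ v := by
  induction h with
  | rel _ _ h =>
    refine ⟨h.hasCancellation, ?_⟩
    obtain ⟨u, r, hXY⟩ := h
    exact (Swap.swap u r hXY.symm).hasCancellation
  | refl => rfl
  | symm _ _ _ ih => exact ih.symm
  | trans _ _ _ _ _ ih ih' => exact ih.trans ih'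

lemma ShuffleEquiv.isReduced_iff {w v : List (V × Bool)} (h : ShuffleEquiv Γ w v) :
    IsReduced Γ w ↔ IsReduced Γ v :=
  h.hasCancellation_iff.not

end Reduced

section NormalForm

def CanStartWith (Γ : SimpleGraph V) (y : V × Bool) (w : List (V × Bool)) : Prop :=
  ∃ s, ShuffleEquiv Γ w (y :: s)

lemma ShuffleEquiv.canStartWith_iff {w v : List (V × Bool)} (h : ShuffleEquiv Γ w v)
    (y : V × Bool) : CanStartWith Γ y w ↔ CanStartWith Γ y v :=
  ⟨fun ⟨s, hs⟩ => ⟨s, h.symm.trans hs⟩, fun ⟨s, hs⟩ => ⟨s, h.trans hs⟩⟩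

lemma canStartWith_cons_iff_of_adj {y z : V × Bool} {w : List (V × Bool)}
    (h : Γ.Adj y.1 z.1) : CanStartWith Γ y (z :: w) ↔ CanStartWith Γ y w := by
  classical
  refine ⟨fun ⟨s, hs⟩ => ⟨s.erase z, ?_⟩, fun ⟨s, hs⟩ => ⟨z :: s, ?_⟩⟩
  · simpa [ne_of_adj h] using hs.erase z
  · exact (hs.cons z).trans (.swap h.symm s)

lemma IsReduced.not_canStartWith_invLetter {x : V × Bool} {w : List (V × Bool)}
    (h : IsReduced Γ (x :: w)) : ¬ CanStartWith Γ (invLetter x) w :=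
  fun ⟨s, hs⟩ => h ((hs.cons x).hasCancellation_iff.2 (hasCancellation_cons_invLetter x s))

lemma IsReduced.cons {x : V × Bool} {w : List (V × Bool)} (hw : IsReduced Γ w)
    (hx : ¬ CanStartWith Γ (invLetter x) w) : IsReduced Γ (x :: w) := by
  rintro ⟨_ | ⟨y, p⟩, x', m, s, h, hm⟩
  · obtain ⟨rfl, rfl⟩ := List.cons.inj h
    exact hx ⟨m ++ s, .append_cons_of_forall_adj (y := invLetter x) hm s⟩
  · obtain ⟨rfl, rfl⟩ := List.cons.inj h
    exact hw ⟨p, x', m, s, rfl, hm⟩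

noncomputable def letterAct (Γ : SimpleGraph V) (x : V × Bool) (w : List (V × Bool)) :
    List (V × Bool) :=
  open scoped Classical in
  if h : CanStartWith Γ (invLetter x) w then h.choose else x :: w

lemma shuffleEquiv_letterAct_iff {x : V × Bool} {w : List (V × Bool)}
    (h : CanStartWith Γ (invLetter x) w) (t : List (V × Bool)) :
    ShuffleEquiv Γ (letterAct Γ x w) t ↔ ShuffleEquiv Γ w (invLetter x :: t) := by
  have hspec : ShuffleEquiv Γ w (invLetter x :: letterAct Γ x w) := by
    rw [letterAct, dif_pos h]
    exact h.choose_spec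
  exact ⟨fun ht => hspec.trans (ht.cons _), fun ht => (hspec.symm.trans ht).cancel_left⟩

lemma letterAct_of_not_canStartWith {x : V × Bool} {w : List (V × Bool)}
    (h : ¬ CanStartWith Γ (invLetter x) w) : letterAct Γ x w = x :: w := by
  rw [letterAct, dif_neg h]

lemma shuffleEquiv_invLetter_cons_letterAct {x : V × Bool} {w : List (V × Bool)}
    (h : CanStartWith Γ (invLetter x) w) :
    ShuffleEquiv Γ w (invLetter x :: letterAct Γ x w) :=
  (shuffleEquiv_letterAct_iff h _).1 (.refl _)

lemma ShuffleEquiv.letterAct {w v : List (V × Bool)} (h : ShuffleEquiv Γ w v) (x : V × Bool) :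
    ShuffleEquiv Γ (letterAct Γ x w) (letterAct Γ x v) := by
  by_cases hw : CanStartWith Γ (invLetter x) w
  · have hv := (h.canStartWith_iff _).1 hw
    exact (shuffleEquiv_letterAct_iff hw _).2 (h.trans (shuffleEquiv_invLetter_cons_letterAct hv))
  · have hv := mt (h.canStartWith_iff _).2 hw
    rw [letterAct_of_not_canStartWith hw, letterAct_of_not_canStartWith hv]
    exact h.cons x

lemma IsReduced.letterAct {w : List (V × Bool)} (hw : IsReduced Γ w) (x : V × Bool) :
    IsReduced Γ (letterAct Γ x w) := by
  by_cases hx : CanStartWith Γ (invLetter x) w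
  · exact ((shuffleEquiv_invLetter_cons_letterAct hx).isReduced_iff.1 hw).of_cons
  · rw [letterAct_of_not_canStartWith hx]
    exact hw.cons hx

lemma letterAct_invLetter_letterAct {w : List (V × Bool)} (hw : IsReduced Γ w)
    (x : V × Bool) : ShuffleEquiv Γ (letterAct Γ (invLetter x) (letterAct Γ x w)) w := by
  by_cases hx : CanStartWith Γ (invLetter x) w
  · have hs := shuffleEquiv_invLetter_cons_letterAct hx
    rw [letterAct_of_not_canStartWith (hs.isReduced_iff.1 hw).not_canStartWith_invLetter]
    exact hs.symm
  · rw [letterAct_of_not_canStartWith hx]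
    have hx' : CanStartWith Γ (invLetter (invLetter x)) (x :: w) := by
      rw [invLetter_invLetter]
      exact ⟨w, .refl _⟩
    rw [shuffleEquiv_letterAct_iff hx', invLetter_invLetter]

lemma letterAct_comm_of_canStartWith_of_not_canStartWith {x y : V × Bool}
    {w : List (V × Bool)} (h : Γ.Adj x.1 y.1) (hx : CanStartWith Γ (invLetter x) w)
    (hy : ¬ CanStartWith Γ (invLetter y) w) :
    ShuffleEquiv Γ (letterAct Γ x (letterAct Γ y w)) (letterAct Γ y (letterAct Γ x w)) := by
  have hs := shuffleEquiv_invLetter_cons_letterAct hx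
  have hy' : ¬ CanStartWith Γ (invLetter y) (letterAct Γ x w) := by
    rwa [← canStartWith_cons_iff_of_adj (y := invLetter y) (z := invLetter x) h.symm,
      ← hs.canStartWith_iff]
  have hx' := (canStartWith_cons_iff_of_adj (y := invLetter x) (w := w) h).2 hx
  rw [letterAct_of_not_canStartWith hy, letterAct_of_not_canStartWith hy',
    shuffleEquiv_letterAct_iff hx']
  exact (hs.cons y).trans (.swap (x := y) (y := invLetter x) h.symm _)

lemma letterAct_comm {x y : V × Bool} (h : Γ.Adj x.1 y.1) (w : List (V × Bool)) :
    ShuffleEquiv Γ (letterAct Γ x (letterAct Γ y w)) (letterAct Γ y (letterAct Γ x w)) := by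
  by_cases hx : CanStartWith Γ (invLetter x) w <;> by_cases hy : CanStartWith Γ (invLetter y) w
  · have hsx := shuffleEquiv_invLetter_cons_letterAct hx
    have hsy := shuffleEquiv_invLetter_cons_letterAct hy
    have hx' : CanStartWith Γ (invLetter x) (letterAct Γ y w) := by
      rwa [← canStartWith_cons_iff_of_adj (y := invLetter x) (z := invLetter y) h,
        ← hsy.canStartWith_iff]
    have hy' : CanStartWith Γ (invLetter y) (letterAct Γ x w) := by
      rwa [← canStartWith_cons_iff_of_adj (y := invLetter y) (z := invLetter x) h.symm,
        ← hsx.canStartWith_iff]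
    rw [shuffleEquiv_letterAct_iff hx', shuffleEquiv_letterAct_iff hy]
    exact hsx.trans (((shuffleEquiv_invLetter_cons_letterAct hy').cons _).trans
      (.swap (x := invLetter x) (y := invLetter y) h _))
  · exact letterAct_comm_of_canStartWith_of_not_canStartWith h hx hy
  · exact (letterAct_comm_of_canStartWith_of_not_canStartWith h.symm hy hx).symm
  · have hx' := mt (canStartWith_cons_iff_of_adj (y := invLetter x) (w := w) h).1 hx
    have hy' := mt (canStartWith_cons_iff_of_adj (y := invLetter y) (w := w) h.symm).1 hy
    rw [letterAct_of_not_canStartWith hx, letterAct_of_not_canStartWith hy,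
      letterAct_of_not_canStartWith hx', letterAct_of_not_canStartWith hy']
    exact .swap h w

variable (Γ) in
abbrev ReducedHeap : Type _ :=
  Quotient ((Relation.EqvGen.setoid (Swap Γ)).comap (Subtype.val : {w // IsReduced Γ w} → _))

variable (Γ) in
noncomputable def heapAct (x : V × Bool) : ReducedHeap Γ → ReducedHeap Γ :=
  Quotient.map (fun w => ⟨letterAct Γ x w.1, w.2.letterAct x⟩) fun _ _ h =>
    ShuffleEquiv.letterAct h x

variable (Γ) in
noncomputable def letterPerm (x : V × Bool) : Equiv.Perm (ReducedHeap Γ) where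
  toFun := heapAct Γ x
  invFun := heapAct Γ (invLetter x)
  left_inv := by
    rintro ⟨w⟩
    exact Quotient.sound (letterAct_invLetter_letterAct w.2 x)
  right_inv := by
    rintro ⟨w⟩
    have := letterAct_invLetter_letterAct w.2 (invLetter x)
    rw [invLetter_invLetter] at this
    exact Quotient.sound this

lemma letterPerm_invLetter (x : V × Bool) :
    letterPerm Γ (invLetter x) = (letterPerm Γ x)⁻¹ :=
  Equiv.ext fun _ => rfl

lemma commute_letterPerm {x y : V × Bool} (h : Γ.Adj x.1 y.1) :
    Commute (letterPerm Γ x) (letterPerm Γ y) := by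
  refine Equiv.ext ?_
  rintro ⟨w⟩
  exact Quotient.sound (letterAct_comm h w.1)

variable (Γ) in
noncomputable def toHeapPerm : RAAG Γ →* Equiv.Perm (ReducedHeap Γ) :=
  PresentedGroup.toGroup (f := fun a => letterPerm Γ (a, true)) <| by
    rintro _ ⟨a, b, hab, rfl⟩
    simp [(commute_letterPerm (x := (a, true)) (y := (b, true)) hab).eq]

lemma toHeapPerm_spellRAAG_singleton (x : V × Bool) :
    toHeapPerm Γ (spellRAAG Γ [x]) = letterPerm Γ x := by
  obtain ⟨a, _ | _⟩ := x
  · rw [← invLetter_invLetter (a, false), spellRAAG_invLetter, map_inv, letterPerm_invLetter]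
    exact congrArg _ (PresentedGroup.toGroup.of _)
  · exact PresentedGroup.toGroup.of _

lemma toHeapPerm_spellRAAG_apply_nil {w : List (V × Bool)} (hw : IsReduced Γ w) :
    toHeapPerm Γ (spellRAAG Γ w) ⟦⟨[], isReduced_nil⟩⟧ = ⟦⟨w, hw⟩⟧ := by
  induction w with
  | nil => simp
  | cons x w ih =>
    rw [spellRAAG_cons, map_mul, Equiv.Perm.mul_apply, ih hw.of_cons,
      toHeapPerm_spellRAAG_singleton]
    exact congrArg _ (Subtype.ext (letterAct_of_not_canStartWith hw.not_canStartWith_invLetter))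

theorem ShuffleEquiv.of_spellRAAG_eq {w v : List (V × Bool)} (hw : IsReduced Γ w)
    (hv : IsReduced Γ v) (h : spellRAAG Γ w = spellRAAG Γ v) : ShuffleEquiv Γ w v := by
  have := congrArg (fun g => toHeapPerm Γ g ⟦⟨[], isReduced_nil⟩⟧) h
  simp only [toHeapPerm_spellRAAG_apply_nil hw, toHeapPerm_spellRAAG_apply_nil hv] at this
  exact Quotient.exact this

theorem IsReduced.length_le {r v : List (V × Bool)} (hr : IsReduced Γ r)
    (h : spellRAAG Γ v = spellRAAG Γ r) : r.length ≤ v.length := by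
  obtain ⟨v', hv', hspell, hlen⟩ := exists_isReduced (Γ := Γ) v
  exact (ShuffleEquiv.of_spellRAAG_eq hr hv' (hspell.trans h).symm).length_eq.trans_le hlen

end NormalForm

section ConjMinimal

lemma spellRAAG_wordPow (w : List (V × Bool)) (k : ℕ) :
    spellRAAG Γ (wordPow w k) = spellRAAG Γ w ^ k := by
  induction k with
  | zero => simp
  | succ k ih => rw [wordPow_succ, spellRAAG_append, ih, pow_succ']

def IsConjMinimal (Γ : SimpleGraph V) (w : List (V × Bool)) : Prop :=
  ∀ v, IsConj (spellRAAG Γ w) (spellRAAG Γ v) → w.length ≤ v.length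

lemma IsConjMinimal.isReduced {w : List (V × Bool)} (h : IsConjMinimal Γ w) : IsReduced Γ w :=
  fun hc => by
    obtain ⟨v, hv, hlen⟩ := hc.exists_shorter
    have := h v (hv ▸ IsConj.refl _)
    omega

lemma IsConjMinimal.rotate {u v : List (V × Bool)} (h : IsConjMinimal Γ (u ++ v)) :
    IsConjMinimal Γ (v ++ u) := by
  intro t ht
  have hconj : IsConj (spellRAAG Γ (u ++ v)) (spellRAAG Γ (v ++ u)) :=
    isConj_iff.2 ⟨spellRAAG Γ v, by simp [spellRAAG_append, mul_assoc]⟩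
  simpa [add_comm] using h t (hconj.trans ht)

/-- In a power of `x :: w`, an `x⁻¹` reached from the leading `x` through letters commuting with
`x` would lie either within the first period, where it cancels against `x`, or beyond the next `x`,
which does not commute with `x`. -/
lemma IsConjMinimal.append_invLetter_ne_append_cons {x : V × Bool} {w m : List (V × Bool)}
    (h : IsConjMinimal Γ (x :: w)) (hm : ∀ z ∈ m, Γ.Adj x.1 z.1) (t r : List (V × Bool)) :
    m ++ invLetter x :: t ≠ w ++ x :: r := by
  intro heq
  rcases List.append_eq_append_iff.1 heq with
    ⟨_ | ⟨y, a⟩, rfl, ha⟩ | ⟨_ | ⟨y, c⟩, rfl, hc⟩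
  · exact ne_invLetter x (List.cons.inj ha).1.symm
  · obtain ⟨rfl, -⟩ := List.cons.inj ha
    exact h.isReduced ⟨[], x, m, a, rfl, hm⟩
  · exact ne_invLetter x (List.cons.inj hc).1
  · obtain ⟨rfl, -⟩ := List.cons.inj hc
    exact Γ.irrefl (hm x (by simp))

theorem IsConjMinimal.isReduced_wordPow {w : List (V × Bool)} (h : IsConjMinimal Γ w)
    (k : ℕ) : IsReduced Γ (wordPow w k) := by
  rintro ⟨p, x, m, s, hk, hm⟩
  obtain ⟨u, v, rfl, K, hK⟩ := exists_wordPow_rotate_of_wordPow_eq_append hk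
  have hrot := wordPow_append_self (v ++ u) K
  rw [← hK] at hrot
  rcases hw' : v ++ u with _ | ⟨y, w'⟩
  · simp [hw', wordPow] at hK
  rw [hw'] at hrot
  obtain ⟨rfl, hrot⟩ := List.cons.inj hrot
  refine (hw' ▸ h.rotate).append_invLetter_ne_append_cons hm (s ++ u ++ x :: w')
    (m ++ invLetter x :: s ++ u) ?_
  simpa using hrot

lemma IsConjMinimal.mul_length_le {w v : List (V × Bool)} (hw : IsConjMinimal Γ w) {n : ℕ}
    (h : IsConj (spellRAAG Γ w ^ n) (spellRAAG Γ v)) : n * w.length ≤ v.length := by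
  obtain ⟨c, hc⟩ := isConj_iff.1 h
  obtain ⟨u, rfl⟩ := spellRAAG_surjective Γ c
  have hk (k : ℕ) : k * (n * w.length) ≤ k * v.length + 2 * u.length := by
    have hspell : spellRAAG Γ (FreeGroup.invRev u ++ wordPow v k ++ u) =
        spellRAAG Γ (wordPow w (n * k)) := by
      rw [spellRAAG_append, spellRAAG_append, spellRAAG_invRev, spellRAAG_wordPow,
        spellRAAG_wordPow, ← hc, conj_pow, pow_mul]
      group
    have := (hw.isReduced_wordPow (n * k)).length_le hspell
    simp only [length_wordPow, List.length_append, FreeGroup.invRev_length] at this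
    nlinarith
  by_contra hlt
  have := hk (2 * u.length + 1)
  nlinarith

end ConjMinimal

variable (Γ) in
lemma minConjWordLength_le {g : RAAG Γ} {w : List (V × Bool)} (h : IsConj g (spellRAAG Γ w)) :
    minConjWordLength Γ g ≤ w.length :=
  Nat.sInf_le ⟨w, h, rfl⟩

lemma exists_isConjMinimal (g : RAAG Γ) :
    ∃ w, IsConj g (spellRAAG Γ w) ∧ w.length = minConjWordLength Γ g ∧
      IsConjMinimal Γ w := by
  obtain ⟨w₀, hw₀⟩ := spellRAAG_surjective Γ g
  obtain ⟨w, hw, hlen⟩ :=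
    Nat.sInf_mem (s := {l | ∃ w, IsConj g (spellRAAG Γ w) ∧ w.length = l})
      ⟨w₀.length, w₀, hw₀ ▸ IsConj.refl _, rfl⟩
  exact ⟨w, hw, hlen, fun v hv => hlen ▸ minConjWordLength_le Γ (hw.trans hv)⟩

end RAAG

open RAAG

theorem minConjWordLength_pow_general
    {V : Type*} (Γ : SimpleGraph V) (g : RAAG Γ) (n : ℕ) :
    minConjWordLength Γ (g ^ n) = n * minConjWordLength Γ g := by
  obtain ⟨w, hgw, hw, hmin⟩ := exists_isConjMinimal g
  obtain ⟨v, hgv, hv, -⟩ := exists_isConjMinimal (g ^ n)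
  have hpow : IsConj (g ^ n) (spellRAAG Γ w ^ n) := hgw.pow n
  apply le_antisymm
  · calc minConjWordLength Γ (g ^ n) ≤ (wordPow w n).length :=
          minConjWordLength_le Γ (spellRAAG_wordPow w n ▸ hpow)
      _ = n * minConjWordLength Γ g := by rw [length_wordPow, hw]
  · rw [← hw, ← hv]
    exact hmin.mul_length_le (hpow.symm.trans hgv)

theorem minConjWordLength_pow
    {V : Type*} [Fintype V] (Γ : SimpleGraph V) (g : RAAG Γ) (n : ℕ) (hn : 0 < n) :
    minConjWordLength Γ (g ^ n) = n * minConjWordLength Γ g :=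
  minConjWordLength_pow_general Γ g n
end
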